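/- arXiv:2005.02673 — 5 statements merged into one kernel-verified Lean document; each statement's English description precedes it below -/
import Mathlib

section
/- Let K be a field and G = (V, E) a finite connected simple graph admitting a vertex partition V = {v0} ⊔ V1 ⊔ V2 that makes v0 a fat nexus. Let W ⊆ K^E be the K-span of the incidence vectors of all vertices of G, and for i = 1, 2 let W_i ⊆ K^E be the K-span of the incidence vectors of the vertices in V_i. Then W ⋆ W is the internal direct sum of the three subspaces W1 ⋆ W1, W1 ⋆ W2 and W2 ⋆ W2; that is, their sum equals W ⋆ W and each of the three subspaces intersects the sum of the other two trivially. -/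
/-- The incidence vector of a vertex `v` with respect to an orientation
`(src, tgt)` of the edges of a simple graph `G`. -/
noncomputable def incVec (K : Type*) [Field K] {V : Type*} [DecidableEq V]
    {G : SimpleGraph V} (src tgt : G.edgeSet → V) (v : V) : G.edgeSet → K :=
  fun e => if v = tgt e then 1 else if v = src e then -1 else 0

/-- The Hadamard product `A ⋆ B` of two subspaces `A, B ⊆ K^E`: the span of all
componentwise products `a ⋆ b` with `a ∈ A` and `b ∈ B`.  (Multiplication on
`E → K` is the componentwise one.) -/
def hadamardSpan {K E : Type*} [Field K] (A B : Submodule K (E → K)) :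
    Submodule K (E → K) :=
  Submodule.span K {x : E → K | ∃ a ∈ A, ∃ b ∈ B, x = a * b}

/-!
On an edge `e = {u, w}` with `w ∉ A`, a product `ι a ⋆ ι b` with `a, b ∈ A` is `1` if
`a = b = u` and `0` otherwise, so every element of `W_A ⋆ W_A` (with `W_A` spanned by the
`ι a`, `a ∈ A`) takes the same value on all edges whose only endpoint in `A` is `u`.
If `v0` is a fat nexus, every edge between `V1` and `V2` shares its `V1`-endpoint `u` with
the edge `{u, v0}`, which does not meet `V2`; hence an element of `W1 ⋆ W1` vanishing on the
edges that miss `V2` is zero. Since `W2 ⋆ W2` and `W1 ⋆ W2` vanish on those edges (and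
symmetrically), the three summands are independent, and they span `W ⋆ W` because
`W = W1 + W2`: the incidence vectors sum to zero.
-/

open Pointwise Submodule

theorem inf_sup_eq_bot_of_le_of_inf_eq_bot {α : Type*} [Lattice α] [OrderBot α]
    [IsModularLattice α] {a b c z z' : α} (ha : a ≤ z) (hb : b ≤ z ⊓ z') (hc : c ≤ z')
    (haz' : a ⊓ z' = ⊥) (hcz : c ⊓ z = ⊥) :
    a ⊓ (b ⊔ c) = ⊥ ∧ b ⊓ (a ⊔ c) = ⊥ ∧ c ⊓ (a ⊔ b) = ⊥ := by
  refine ⟨eq_bot_iff.mpr ?_, eq_bot_iff.mpr ?_, eq_bot_iff.mpr ?_⟩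
  · exact haz' ▸ inf_le_inf_left a (sup_le (hb.trans inf_le_right) hc)
  · have hac : (c ⊔ a) ⊓ z' = c := by rw [sup_inf_assoc_of_le a hc, haz', sup_bot_eq]
    calc b ⊓ (a ⊔ c) ≤ z ⊓ ((c ⊔ a) ⊓ z') := by
          rw [sup_comm, inf_comm _ z', ← inf_assoc]; exact inf_le_inf_right _ hb
      _ = ⊥ := by rw [hac, inf_comm, hcz]
  · exact hcz ▸ inf_le_inf_left c (sup_le ha (hb.trans inf_le_left))

section Hadamard

variable {K E : Type*} [Field K]

theorem hadamardSpan_eq_mul (A B : Submodule K (E → K)) : hadamardSpan A B = A * B := by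
  rw [hadamardSpan, mul_eq_span_mul_set]
  congr 1
  ext x
  simp only [Set.mem_mul, SetLike.mem_coe]
  exact ⟨fun ⟨a, ha, b, hb, h⟩ => ⟨a, ha, b, hb, h.symm⟩,
    fun ⟨a, ha, b, hb, h⟩ => ⟨a, ha, b, hb, h.symm⟩⟩

theorem hadamardSpan_comm (A B : Submodule K (E → K)) : hadamardSpan A B = hadamardSpan B A := by
  rw [hadamardSpan_eq_mul, hadamardSpan_eq_mul, mul_comm]

theorem hadamardSpan_span_span (S T : Set (E → K)) :
    hadamardSpan (span K S) (span K T) = span K (S * T) := by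
  rw [hadamardSpan_eq_mul, span_mul_span]

theorem hadamardSpan_sup_self (A B : Submodule K (E → K)) :
    hadamardSpan (A ⊔ B) (A ⊔ B) = hadamardSpan A A ⊔ hadamardSpan A B ⊔ hadamardSpan B B := by
  simp only [hadamardSpan_eq_mul, Submodule.mul_sup, Submodule.sup_mul, mul_comm B A]
  rw [sup_assoc, sup_assoc, ← sup_assoc (A * B), sup_idem, ← sup_assoc]

end Hadamard

section Incidence

variable {K V : Type*} [Field K] {G : SimpleGraph V}

variable (K G) in
def supportedOnEdgesMeeting (A : Set V) :
    Submodule K (G.edgeSet → K) :=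
  pi {e | ∀ v ∈ (e : Sym2 V), v ∉ A} fun _ => ⊥

theorem mem_supportedOnEdgesMeeting {A : Set V} {x : G.edgeSet → K} :
    x ∈ supportedOnEdgesMeeting K G A ↔
      ∀ e : G.edgeSet, (∀ v ∈ (e : Sym2 V), v ∉ A) → x e = 0 := by
  simp [supportedOnEdgesMeeting, mem_pi]

def IsOrientation (src tgt : G.edgeSet → V) : Prop :=
  ∀ e : G.edgeSet, (e : Sym2 V) = s(src e, tgt e)

variable {src tgt : G.edgeSet → V}

theorem IsOrientation.adj (ho : IsOrientation src tgt) (e : G.edgeSet) :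
    G.Adj (src e) (tgt e) := by
  simpa [ho e] using e.prop

theorem IsOrientation.exists_eq_mk_of_meets (ho : IsOrientation src tgt) {A B : Set V}
    (hAB : Disjoint A B) (e : G.edgeSet) (hA : ∃ v ∈ (e : Sym2 V), v ∈ A)
    (hB : ∃ v ∈ (e : Sym2 V), v ∈ B) : ∃ u ∈ A, ∃ w ∈ B, (e : Sym2 V) = s(u, w) := by
  obtain ⟨a, ha, haA⟩ := hA
  obtain ⟨b, hb, hbB⟩ := hB
  rw [ho e, Sym2.mem_iff] at ha hb
  have hab : a ≠ b := fun h => Set.disjoint_left.mp hAB haA (h ▸ hbB)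
  rcases ha with rfl | rfl <;> rcases hb with rfl | rfl
  · exact absurd rfl hab
  · exact ⟨_, haA, _, hbB, ho e⟩
  · exact ⟨_, haA, _, hbB, (ho e).trans Sym2.eq_swap⟩
  · exact absurd rfl hab

variable [DecidableEq V]

local notation "ι" => incVec K src tgt

theorem incVec_apply_of_notMem (ho : IsOrientation src tgt) {v : V} {e : G.edgeSet}
    (h : v ∉ (e : Sym2 V)) : ι v e = 0 := by
  rw [ho e, Sym2.mem_iff, not_or] at h
  simp [incVec, h.1, h.2]

theorem incVec_mul_self_apply_of_mem (ho : IsOrientation src tgt) {v : V} {e : G.edgeSet}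
    (h : v ∈ (e : Sym2 V)) : ι v e * ι v e = 1 := by
  rw [ho e, Sym2.mem_iff] at h
  simp only [incVec]
  rcases h with rfl | rfl <;> split_ifs <;> simp_all

theorem sum_incVec [Fintype V] (ho : IsOrientation src tgt) : ∑ v, ι v = 0 := by
  funext e
  have hne := (ho.adj e).ne
  have hsplit : ∀ v, ι v e = (if v = tgt e then 1 else 0) + (if v = src e then -1 else 0) := by
    intro v
    simp only [incVec]
    split_ifs <;> simp_all
  simp [Finset.sum_apply, hsplit, Finset.sum_add_distrib]

theorem span_image_incVec_eq_span_range [Fintype V] (ho : IsOrientation src tgt) {S : Set V}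
    (v0 : V) (hS : ∀ v, v ≠ v0 → v ∈ S) : span K (ι '' S) = span K (Set.range ι) := by
  refine le_antisymm (span_mono (Set.image_subset_range _ _)) (span_le.mpr ?_)
  rintro _ ⟨v, rfl⟩
  by_cases hv : v = v0
  · subst hv
    have hv0 : ι v = -∑ w ∈ Finset.univ.erase v, ι w := by
      rw [eq_neg_iff_add_eq_zero, Finset.add_sum_erase _ _ (Finset.mem_univ v), sum_incVec ho]
    rw [SetLike.mem_coe, hv0]
    exact neg_mem (sum_mem fun w hw => subset_span ⟨w, hS w (Finset.ne_of_mem_erase hw), rfl⟩)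
  · exact subset_span ⟨v, hS v hv, rfl⟩

theorem hadamardSpan_le_supportedOnEdgesMeeting_left (ho : IsOrientation src tgt) (A B : Set V) :
    hadamardSpan (span K (ι '' A)) (span K (ι '' B)) ≤ supportedOnEdgesMeeting K G A := by
  rw [hadamardSpan_span_span, span_le]
  refine Set.image2_subset_iff.mpr ?_
  rintro _ ⟨a, ha, rfl⟩ _ -
  refine mem_supportedOnEdgesMeeting.mpr fun e he => ?_
  rw [Pi.mul_apply, incVec_apply_of_notMem ho fun h => he a h ha, zero_mul]

theorem hadamardSpan_le_supportedOnEdgesMeeting_right (ho : IsOrientation src tgt)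
    (A B : Set V) :
    hadamardSpan (span K (ι '' A)) (span K (ι '' B)) ≤ supportedOnEdgesMeeting K G B := by
  rw [hadamardSpan_comm]
  exact hadamardSpan_le_supportedOnEdgesMeeting_left ho B A

theorem incVec_mul_incVec_apply (ho : IsOrientation src tgt) {a b u w : V} {e : G.edgeSet}
    (he : (e : Sym2 V) = s(u, w)) (ha : a ≠ w) (hb : b ≠ w) :
    (ι a * ι b) e = if a = u ∧ b = u then 1 else 0 := by
  rw [Pi.mul_apply]
  split_ifs with hab
  · obtain ⟨rfl, rfl⟩ := hab
    exact incVec_mul_self_apply_of_mem ho (he ▸ Sym2.mem_mk_left _ _)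
  · rcases not_and_or.mp hab with h | h
    · rw [incVec_apply_of_notMem ho (by simp [he, h, ha]), zero_mul]
    · rw [incVec_apply_of_notMem ho (v := b) (by simp [he, h, hb]), mul_zero]

theorem apply_eq_apply_of_mem_hadamardSpan_self (ho : IsOrientation src tgt) {A : Set V}
    {u w w' : V} {e e' : G.edgeSet} (hw : w ∉ A) (hw' : w' ∉ A) (he : (e : Sym2 V) = s(u, w))
    (he' : (e' : Sym2 V) = s(u, w')) {x : G.edgeSet → K}
    (hx : x ∈ hadamardSpan (span K (ι '' A)) (span K (ι '' A))) : x e = x e' := by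
  suffices hle : hadamardSpan (span K (ι '' A)) (span K (ι '' A)) ≤
      LinearMap.eqLocus (LinearMap.proj e) (LinearMap.proj e') from hle hx
  rw [hadamardSpan_span_span, span_le]
  refine Set.image2_subset_iff.mpr ?_
  rintro _ ⟨a, ha, rfl⟩ _ ⟨b, hb, rfl⟩
  have hne : ∀ {c y}, c ∈ A → y ∉ A → c ≠ y := fun hc hy h => hy (h ▸ hc)
  change (ι a * ι b) e = (ι a * ι b) e'
  rw [incVec_mul_incVec_apply ho he (hne ha hw) (hne hb hw),
    incVec_mul_incVec_apply ho he' (hne ha hw') (hne hb hw')]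

theorem hadamardSpan_self_inf_supportedOnEdgesMeeting_eq_bot (ho : IsOrientation src tgt)
    {v0 : V} {A B : Set V} (hA : v0 ∉ A) (hB : v0 ∉ B) (hAB : Disjoint A B)
    (hfat : ∀ a ∈ A, ∀ b ∈ B, G.Adj a b → G.Adj v0 a) :
    hadamardSpan (span K (ι '' A)) (span K (ι '' A)) ⊓ supportedOnEdgesMeeting K G B = ⊥ := by
  refine eq_bot_iff.mpr fun x ⟨hxA, hxB⟩ => (mem_bot K).mpr (funext fun e => ?_)
  have hxA' := mem_supportedOnEdgesMeeting.mp
    (hadamardSpan_le_supportedOnEdgesMeeting_left ho A A hxA)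
  rw [SetLike.mem_coe, mem_supportedOnEdgesMeeting] at hxB
  by_cases heB : ∀ v ∈ (e : Sym2 V), v ∉ B
  · exact hxB e heB
  by_cases heA : ∀ v ∈ (e : Sym2 V), v ∉ A
  · exact hxA' e heA
  push Not at heA heB
  obtain ⟨u, hu, w, hw, he⟩ := ho.exists_eq_mk_of_meets hAB e heA heB
  have huw : G.Adj u w := by simpa [he] using e.prop
  let e' : G.edgeSet := ⟨s(u, v0), (hfat u hu w hw huw).symm⟩
  have huB : u ∉ B := Set.disjoint_left.mp hAB hu
  calc x e = x e' :=
        apply_eq_apply_of_mem_hadamardSpan_self ho (Set.disjoint_right.mp hAB hw) hA he rfl hxA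
    _ = 0 := hxB e' (by rintro v hv; rcases Sym2.mem_iff.mp hv with rfl | rfl <;> assumption)

end Incidence

theorem stmt_1_general {K V : Type*} [Field K] [Fintype V] [DecidableEq V]
    (G : SimpleGraph V)
    (src tgt : G.edgeSet → V)
    (horient : ∀ e : G.edgeSet, (e : Sym2 V) = Sym2.mk (src e) (tgt e))
    (v0 : V) (V1 V2 : Set V)
    (hv01 : v0 ∉ V1) (hv02 : v0 ∉ V2) (hdisj : V1 ∩ V2 = ∅)
    (hcover : {v0} ∪ V1 ∪ V2 = Set.univ)
    (hfat : ∀ a ∈ V1, ∀ b ∈ V2, G.Adj a b →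
      a ∈ insert v0 (G.neighborSet v0) ∧ b ∈ insert v0 (G.neighborSet v0))
    (W W1 W2 : Submodule K (G.edgeSet → K))
    (hW : W = Submodule.span K (Set.range (incVec K src tgt)))
    (hW1 : W1 = Submodule.span K (incVec K src tgt '' V1))
    (hW2 : W2 = Submodule.span K (incVec K src tgt '' V2)) :
    hadamardSpan W1 W1 ⊔ hadamardSpan W1 W2 ⊔ hadamardSpan W2 W2 =
      hadamardSpan W W ∧
    hadamardSpan W1 W1 ⊓ (hadamardSpan W1 W2 ⊔ hadamardSpan W2 W2) = ⊥ ∧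
    hadamardSpan W1 W2 ⊓ (hadamardSpan W1 W1 ⊔ hadamardSpan W2 W2) = ⊥ ∧
    hadamardSpan W2 W2 ⊓ (hadamardSpan W1 W1 ⊔ hadamardSpan W1 W2) = ⊥ := by
  have hWsup : W = W1 ⊔ W2 := by
    rw [hW, hW1, hW2, ← span_union, ← Set.image_union,
      span_image_incVec_eq_span_range horient v0]
    intro v hv
    have hv' : v ∈ {v0} ∪ V1 ∪ V2 := hcover ▸ Set.mem_univ v
    simpa [hv] using hv'
  have hdisj' : Disjoint V1 V2 := Set.disjoint_iff_inter_eq_empty.mpr hdisj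
  have hfat1 : ∀ a ∈ V1, ∀ b ∈ V2, G.Adj a b → G.Adj v0 a := fun a ha b hb hab =>
    (hfat a ha b hb hab).1.resolve_left fun h => hv01 (h ▸ ha)
  have hfat2 : ∀ b ∈ V2, ∀ a ∈ V1, G.Adj b a → G.Adj v0 b := fun b hb a ha hba =>
    (hfat a ha b hb hba.symm).2.resolve_left fun h => hv02 (h ▸ hb)
  subst hW1 hW2
  refine ⟨by rw [hWsup, hadamardSpan_sup_self], inf_sup_eq_bot_of_le_of_inf_eq_bot
    (hadamardSpan_le_supportedOnEdgesMeeting_left horient V1 V1)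
    (le_inf (hadamardSpan_le_supportedOnEdgesMeeting_left horient V1 V2)
      (hadamardSpan_le_supportedOnEdgesMeeting_right horient V1 V2))
    (hadamardSpan_le_supportedOnEdgesMeeting_left horient V2 V2)
    (hadamardSpan_self_inf_supportedOnEdgesMeeting_eq_bot horient hv01 hv02 hdisj' hfat1)
    (hadamardSpan_self_inf_supportedOnEdgesMeeting_eq_bot horient hv02 hv01 hdisj'.symm hfat2)⟩

theorem stmt_1 {K V : Type*} [Field K] [Fintype V] [DecidableEq V]
    (G : SimpleGraph V) (hconn : G.Connected)
    (src tgt : G.edgeSet → V)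
    (horient : ∀ e : G.edgeSet, (e : Sym2 V) = Sym2.mk (src e) (tgt e))
    (v0 : V) (V1 V2 : Set V)
    (hv01 : v0 ∉ V1) (hv02 : v0 ∉ V2) (hdisj : V1 ∩ V2 = ∅)
    (hcover : {v0} ∪ V1 ∪ V2 = Set.univ)
    (hne1 : V1.Nonempty) (hne2 : V2.Nonempty)
    (hfat : ∀ a ∈ V1, ∀ b ∈ V2, G.Adj a b →
      a ∈ insert v0 (G.neighborSet v0) ∧ b ∈ insert v0 (G.neighborSet v0))
    (hcone : insert v0 (G.neighborSet v0) = Set.univ → V1.ncard ≠ V2.ncard)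
    (W W1 W2 : Submodule K (G.edgeSet → K))
    (hW : W = Submodule.span K (Set.range (incVec K src tgt)))
    (hW1 : W1 = Submodule.span K (incVec K src tgt '' V1))
    (hW2 : W2 = Submodule.span K (incVec K src tgt '' V2)) :
    hadamardSpan W1 W1 ⊔ hadamardSpan W1 W2 ⊔ hadamardSpan W2 W2 =
      hadamardSpan W W ∧
    hadamardSpan W1 W1 ⊓ (hadamardSpan W1 W2 ⊔ hadamardSpan W2 W2) = ⊥ ∧
    hadamardSpan W1 W2 ⊓ (hadamardSpan W1 W1 ⊔ hadamardSpan W2 W2) = ⊥ ∧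
    hadamardSpan W2 W2 ⊓ (hadamardSpan W1 W1 ⊔ hadamardSpan W1 W2) = ⊥ :=
  stmt_1_general G src tgt horient v0 V1 V2 hv01 hv02 hdisj hcover hfat W W1 W2 hW hW1 hW2
end

section
/- Let K be a field and G = (V, E) a finite connected simple graph with a vertex v0 and subsets V1, V2 ⊆ V such that V1 ∪ V2 = V, V1 ∩ V2 = {v0}, and no edge of G joins a vertex of V1 ∖ {v0} to a vertex of V2 ∖ {v0}; let E1 and E2 be the sets of edges with both endpoints in V1 and in V2 respectively, so E = E1 ⊔ E2. Let W ⊆ K^E be the K-span of the incidence vectors of all vertices of G, and for i = 1, 2 let W_i ⊆ K^E be the K-span of the incidence vectors of the vertices in V_i ∖ {v0}. Then every vector of W_i has all coordinates indexed by E ∖ E_i equal to zero, and W is the internal direct sum of W1 and W2: W1 ∩ W2 = {0} and W1 + W2 = W. -/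
theorem Submodule.apply_eq_zero_of_mem_span {R α : Type*} [Semiring R] {s : Set (α → R)} {a : α}
    (hs : ∀ f ∈ s, f a = 0) {w : α → R} (hw : w ∈ span R s) : w a = 0 :=
  (span_le (p := LinearMap.ker (LinearMap.proj a)) |>.mpr hs) hw

theorem Submodule.inf_eq_bot_of_disjoint_supports {R α : Type*} [Semiring R]
    {P Q : Submodule R (α → R)} {p q : α → Prop}
    (hP : ∀ w ∈ P, ∀ a, ¬ p a → w a = 0) (hQ : ∀ w ∈ Q, ∀ a, ¬ q a → w a = 0)
    (hpq : ∀ a, ¬ (p a ∧ q a)) : P ⊓ Q = ⊥ := by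
  refine eq_bot_iff.mpr fun w ⟨hwP, hwQ⟩ => (Submodule.mem_bot R).mpr (funext fun a => ?_)
  by_cases ha : p a
  · exact hQ w hwQ a fun hq => hpq a ⟨ha, hq⟩
  · exact hP w hwP a ha

theorem Submodule.span_image_compl_singleton_of_sum_eq_zero {R M ι : Type*} [Ring R]
    [AddCommGroup M] [Module R M] [Fintype ι] [DecidableEq ι] {f : ι → M}
    (hf : ∑ j, f j = 0) (i : ι) : span R (f '' {i}ᶜ) = span R (Set.range f) := by
  refine le_antisymm (span_mono (Set.image_subset_range _ _)) (span_le.mpr ?_)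
  rintro _ ⟨j, rfl⟩
  by_cases hj : j = i
  · subst hj
    have hfj : f j = -∑ k ∈ Finset.univ.erase j, f k :=
      eq_neg_of_add_eq_zero_left (by rw [Finset.add_sum_erase _ _ (Finset.mem_univ j), hf])
    rw [SetLike.mem_coe, hfj]
    exact neg_mem (sum_mem fun k hk => subset_span ⟨k, Finset.ne_of_mem_erase hk, rfl⟩)
  · exact subset_span ⟨j, hj, rfl⟩

namespace SimpleGraph

variable {V : Type*} {G : SimpleGraph V}

theorem mem_of_mem_edge_of_forall_adj {A : Set V} {v : V} (hv : v ∈ A)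
    (hnbr : ∀ u, G.Adj v u → u ∈ A) {e : Sym2 V} (he : e ∈ G.edgeSet) (hve : v ∈ e) :
    ∀ u ∈ e, u ∈ A := by
  intro u hue
  by_cases huv : u = v
  · exact huv ▸ hv
  · refine hnbr u ?_
    rwa [← mem_edgeSet, ← (Sym2.mem_and_mem_iff (Ne.symm huv)).mp ⟨hve, hue⟩]

theorem not_forall_mem_edge_eq {e : Sym2 V} (he : e ∈ G.edgeSet) (v0 : V) :
    ¬ ∀ u ∈ e, u = v0 := by
  induction e using Sym2.ind with
  | h x y => exact fun h => (G.ne_of_adj he) ((h x (Sym2.mem_mk_left x y)).trans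
      (h y (Sym2.mem_mk_right x y)).symm)

theorem adj_mem_of_mem_of_separated {A B : Set V} {v0 : V} (hcover : ∀ u, u ∈ A ∨ u ∈ B)
    (hv0 : v0 ∈ A) (hsep : ∀ a ∈ A, ∀ b ∈ B, a ≠ v0 → b ≠ v0 → ¬ G.Adj a b)
    {v : V} (hv : v ∈ A \ {v0}) (u : V) (huv : G.Adj v u) : u ∈ A := by
  by_cases hu0 : u = v0
  · exact hu0 ▸ hv0
  · exact (hcover u).resolve_right fun hu => hsep v hv.1 u hu hv.2 hu0 huv

end SimpleGraph

section incVec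

variable {K V : Type*} [Field K] [DecidableEq V] {G : SimpleGraph V} {src tgt : G.edgeSet → V}

theorem incVec_apply_of_ne {v : V} {e : G.edgeSet} (hs : v ≠ src e) (ht : v ≠ tgt e) :
    incVec K src tgt v e = 0 := by
  simp [incVec, hs, ht]

variable (horient : ∀ e : G.edgeSet, (e : Sym2 V) = Sym2.mk (src e) (tgt e))
include horient

theorem sum_incVec_eq_zero [Fintype V] : ∑ v, incVec K src tgt v = 0 := by
  funext e
  have hne : src e ≠ tgt e := G.ne_of_adj (by simpa [horient e] using e.2)
  simp [incVec, Finset.sum_ite, Finset.filter_eq', Finset.filter_ne', hne]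

theorem apply_eq_zero_of_mem_span_incVec {S A : Set V}
    (hS : ∀ v ∈ S, v ∈ A ∧ ∀ u, G.Adj v u → u ∈ A)
    {w : G.edgeSet → K} (hw : w ∈ Submodule.span K (incVec K src tgt '' S))
    (e : G.edgeSet) (he : ¬ ∀ u ∈ (e : Sym2 V), u ∈ A) : w e = 0 := by
  refine Submodule.apply_eq_zero_of_mem_span ?_ hw
  rintro _ ⟨v, hv, rfl⟩
  have hv_not_mem : v ∉ (e : Sym2 V) := fun hve =>
    he (SimpleGraph.mem_of_mem_edge_of_forall_adj (hS v hv).1 (hS v hv).2 e.2 hve)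
  rw [horient e, Sym2.mem_iff, not_or] at hv_not_mem
  exact incVec_apply_of_ne hv_not_mem.1 hv_not_mem.2

end incVec

theorem stmt_5_general {K V : Type*} [Field K] [Fintype V] [DecidableEq V]
    (G : SimpleGraph V)
    (src tgt : G.edgeSet → V)
    (horient : ∀ e : G.edgeSet, (e : Sym2 V) = Sym2.mk (src e) (tgt e))
    (v0 : V) (V1 V2 : Set V)
    (hcover : V1 ∪ V2 = Set.univ) (hmeet : V1 ∩ V2 = {v0})
    -- no edge joins a vertex of `V1 ∖ {v0}` to a vertex of `V2 ∖ {v0}`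
    (hsep : ∀ a ∈ V1, ∀ b ∈ V2, a ≠ v0 → b ≠ v0 → ¬ G.Adj a b) :
    -- every vector of `W1` is supported on edges with both endpoints in `V1`
    (∀ w ∈ Submodule.span K (incVec K src tgt '' (V1 \ {v0})),
      ∀ e : G.edgeSet, ¬ (∀ v : V, v ∈ (e : Sym2 V) → v ∈ V1) → w e = 0) ∧
    -- every vector of `W2` is supported on edges with both endpoints in `V2`
    (∀ w ∈ Submodule.span K (incVec K src tgt '' (V2 \ {v0})),
      ∀ e : G.edgeSet, ¬ (∀ v : V, v ∈ (e : Sym2 V) → v ∈ V2) → w e = 0) ∧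
    -- `W = W1 ⊕ W2` internally
    Submodule.span K (incVec K src tgt '' (V1 \ {v0})) ⊓
      Submodule.span K (incVec K src tgt '' (V2 \ {v0})) = ⊥ ∧
    Submodule.span K (incVec K src tgt '' (V1 \ {v0})) ⊔
      Submodule.span K (incVec K src tgt '' (V2 \ {v0})) =
      Submodule.span K (Set.range (incVec K src tgt)) := by
  have hv0 : v0 ∈ V1 ∩ V2 := hmeet ▸ rfl
  have hcover' : ∀ u, u ∈ V1 ∨ u ∈ V2 := fun u => Set.eq_univ_iff_forall.mp hcover u
  have hW1 := fun w (hw : w ∈ Submodule.span K (incVec K src tgt '' (V1 \ {v0}))) =>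
    apply_eq_zero_of_mem_span_incVec horient (fun v hv => ⟨hv.1,
      SimpleGraph.adj_mem_of_mem_of_separated hcover' hv0.1 hsep hv⟩) hw
  have hW2 := fun w (hw : w ∈ Submodule.span K (incVec K src tgt '' (V2 \ {v0}))) =>
    apply_eq_zero_of_mem_span_incVec horient (fun v hv => ⟨hv.1,
      SimpleGraph.adj_mem_of_mem_of_separated (fun u => (hcover' u).symm) hv0.2
        (fun a ha b hb ha0 hb0 hab => hsep b hb a ha hb0 ha0 hab.symm) hv⟩) hw
  refine ⟨hW1, hW2, Submodule.inf_eq_bot_of_disjoint_supports hW1 hW2 fun e ⟨h1, h2⟩ =>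
    SimpleGraph.not_forall_mem_edge_eq e.2 v0 fun u hu =>
      Set.mem_singleton_iff.mp (hmeet ▸ ⟨h1 u hu, h2 u hu⟩), ?_⟩
  rw [← Submodule.span_union, ← Set.image_union, ← Set.union_sdiff_distrib, hcover,
    ← Set.compl_eq_univ_sdiff]
  exact Submodule.span_image_compl_singleton_of_sum_eq_zero (sum_incVec_eq_zero horient) v0

theorem stmt_5 {K V : Type*} [Field K] [Fintype V] [DecidableEq V]
    (G : SimpleGraph V) (hconn : G.Connected)
    (src tgt : G.edgeSet → V)
    (horient : ∀ e : G.edgeSet, (e : Sym2 V) = Sym2.mk (src e) (tgt e))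
    (v0 : V) (V1 V2 : Set V)
    (hcover : V1 ∪ V2 = Set.univ) (hmeet : V1 ∩ V2 = {v0})
    -- no edge joins a vertex of `V1 ∖ {v0}` to a vertex of `V2 ∖ {v0}`
    (hsep : ∀ a ∈ V1, ∀ b ∈ V2, a ≠ v0 → b ≠ v0 → ¬ G.Adj a b) :
    -- every vector of `W1` is supported on edges with both endpoints in `V1`
    (∀ w ∈ Submodule.span K (incVec K src tgt '' (V1 \ {v0})),
      ∀ e : G.edgeSet, ¬ (∀ v : V, v ∈ (e : Sym2 V) → v ∈ V1) → w e = 0) ∧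
    -- every vector of `W2` is supported on edges with both endpoints in `V2`
    (∀ w ∈ Submodule.span K (incVec K src tgt '' (V2 \ {v0})),
      ∀ e : G.edgeSet, ¬ (∀ v : V, v ∈ (e : Sym2 V) → v ∈ V2) → w e = 0) ∧
    -- `W = W1 ⊕ W2` internally
    Submodule.span K (incVec K src tgt '' (V1 \ {v0})) ⊓
      Submodule.span K (incVec K src tgt '' (V2 \ {v0})) = ⊥ ∧
    Submodule.span K (incVec K src tgt '' (V1 \ {v0})) ⊔
      Submodule.span K (incVec K src tgt '' (V2 \ {v0})) =
      Submodule.span K (Set.range (incVec K src tgt)) :=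
  stmt_5_general G src tgt horient v0 V1 V2 hcover hmeet hsep
end

section
/- Let M be a matroid on a finite ground set E and let e, f ∈ E be distinct elements such that {e, f} is a circuit of M (i.e. e and f are parallel). Then over any field K the basis polynomial of M is obtained from the basis polynomial of the deletion M∖e by substituting x_e + x_f for x_f: ψ_M = φ(ψ_{M∖e}), where φ : K[x_g : g ∈ E ∖ {e}] → K[x_g : g ∈ E] is the K-algebra homomorphism with φ(x_f) = x_e + x_f and φ(x_g) = x_g for all g ∈ E ∖ {e, f}. -/
/-- A circuit of a matroid is a minimal dependent set. -/
def Matroid.IsCircuit' {α : Type*} (M : Matroid α) (C : Set α) : Prop :=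
  Minimal M.Dep C

open Classical in
/-- The basis polynomial of a matroid `M` on a finite ground type `β` over a
field `K`: the sum, over all bases `B` of `M`, of the monomials
`∏ (g ∈ B) x_g`. -/
noncomputable def basisPoly (K : Type*) [Field K] {β : Type*} [Fintype β]
    [DecidableEq β] (M : Matroid β) : MvPolynomial β K :=
  ∑ B ∈ Finset.univ.filter (fun B : Finset β => M.IsBase ↑B),
    ∏ g ∈ B, MvPolynomial.X g

/-!
Since `e` lies on a circuit it is not a coloop, so the bases of `M ∖ e` are exactly the bases of
`M` avoiding `e`. For such a base `B`, substituting `x_e + x_f` for `x_f` in `∏_{g ∈ B} x_g`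
leaves it unchanged if `f ∉ B`, and otherwise adds the monomial of `B - f + e`, which is again
a base because `e` and `f` are parallel. Exchanging `f` for `e` is a bijection between the bases
avoiding `e` and containing `f` and the bases containing `e` (these never contain `f`), so the
extra monomials are exactly those of the bases of `M` through `e`.
-/

open Function Set

lemma Finset.prod_update_add {α R : Type*} [DecidableEq α] [CommSemiring R] (v : α → R)
    {e f : α} {A : Finset α} (he : e ∉ A) :
    ∏ x ∈ A, update v f (v e + v f) x
      = ∏ x ∈ A, v x + if f ∈ A then ∏ x ∈ insert e (A.erase f), v x else 0 := by
  split_ifs with hf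
  · rw [prod_update_of_mem hf, sdiff_singleton_eq_erase, ← mul_prod_erase A v hf,
      prod_insert (fun h ↦ he (mem_of_mem_erase h))]
    ring
  · rw [prod_update_of_notMem hf, add_zero]

lemma Finset.insert_erase_insert_erase {α : Type*} [DecidableEq α] {a b : α} {s : Finset α}
    (ha : a ∈ s) (hb : b ∉ s) : insert a ((insert b (s.erase a)).erase b) = s := by
  rw [Finset.erase_insert fun h ↦ hb (Finset.mem_of_mem_erase h), Finset.insert_erase ha]

namespace Matroid

variable {α : Type*} {M : Matroid α} {B I : Set α} {e f : α}

lemma IsCircuit.mem_closure_singleton_of_pair (hC : M.IsCircuit {e, f}) (hef : e ≠ f) :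
    e ∈ M.closure {f} := by
  simpa [hef] using hC.mem_closure_sdiff_singleton_of_mem (mem_insert e {f})

lemma IsBase.exchange_isBase_of_mem_closure_singleton (hB : M.IsBase B) (he : e ∈ B)
    (hef : e ∈ M.closure {f}) (hf : f ∈ M.E) : M.IsBase (insert f (B \ {e})) := by
  refine hB.exchange_base_of_notMem_closure he fun hfB ↦ ?_
  have heB : e ∈ M.closure (B \ {e}) :=
    M.closure_subset_closure_of_subset_closure (singleton_subset_iff.2 hfB) hef
  exact (hB.indep.notMem_closure_sdiff_of_mem he) heB

lemma coindep_singleton_of_not_isColoop (he : e ∈ M.E) (h : ¬ M.IsColoop e) :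
    M.Coindep {e} := by
  rw [Coindep, indep_singleton, isNonloop_iff]
  exact ⟨h, he⟩

lemma isBasis'_compl_singleton_iff (he : e ∈ M.E) (h : ¬ M.IsColoop e) :
    M.IsBasis' I {e}ᶜ ↔ M.IsBase I ∧ e ∉ I := by
  rw [isBasis'_iff_isBasis_inter_ground, inter_comm, ← sdiff_eq, ← delete_isBase_iff,
    (coindep_singleton_of_not_isColoop he h).delete_isBase_iff, disjoint_singleton_right]


lemma Indep.notMem_of_isCircuit_pair (hI : M.Indep I) (hC : M.IsCircuit {e, f}) (he : e ∈ I) :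
    f ∉ I :=
  fun hf ↦ hC.dep.not_indep (hI.subset (pair_subset he hf))

lemma IsCircuit.isBase_insert_erase [DecidableEq α] (hC : M.IsCircuit {e, f}) (hef : e ≠ f)
    {B : Finset α} (hB : M.IsBase ↑B) (he : e ∈ B) : M.IsBase ↑(insert f (B.erase e)) := by
  push_cast
  exact hB.exchange_isBase_of_mem_closure_singleton he (hC.mem_closure_singleton_of_pair hef)
    (hC.subset_ground (by simp))

open Classical in
lemma IsCircuit.sum_isBase_mem_eq [Fintype α] [DecidableEq α] {R : Type*} [AddCommMonoid R]
    (hC : M.IsCircuit {e, f}) (hef : e ≠ f) (F : Finset α → R) :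
    ∑ A ∈ Finset.univ.filter (fun A : Finset α ↦ M.IsBase ↑A ∧ e ∈ A), F A =
      ∑ A ∈ Finset.univ.filter (fun A : Finset α ↦ (M.IsBase ↑A ∧ e ∉ A) ∧ f ∈ A),
        F (insert e (A.erase f)) := by
  have hC' : M.IsCircuit {f, e} := by rwa [pair_comm]
  refine Finset.sum_nbij' (fun B ↦ insert f (B.erase e)) (fun B ↦ insert e (B.erase f))
    ?_ ?_ ?_ ?_ ?_ <;> simp only [Finset.mem_filter, Finset.mem_univ, true_and]
  · rintro B ⟨hB, he⟩
    exact ⟨⟨hC.isBase_insert_erase hef hB he, by simp [hef]⟩, Finset.mem_insert_self _ _⟩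
  · rintro B ⟨⟨hB, he⟩, hf⟩
    exact ⟨hC'.isBase_insert_erase hef.symm hB hf, Finset.mem_insert_self _ _⟩
  · rintro B ⟨hB, he⟩
    exact Finset.insert_erase_insert_erase he (hB.indep.notMem_of_isCircuit_pair hC he)
  · rintro B ⟨⟨-, he⟩, hf⟩
    exact Finset.insert_erase_insert_erase hf he
  · rintro B ⟨hB, he⟩
    rw [Finset.insert_erase_insert_erase he (hB.indep.notMem_of_isCircuit_pair hC he)]

open Classical in
theorem IsCircuit.sum_prod_isBase_eq [Fintype α] [DecidableEq α] {R : Type*} [CommSemiring R]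
    (hC : M.IsCircuit {e, f}) (hef : e ≠ f) (v : α → R) :
    ∑ A ∈ Finset.univ.filter (fun A : Finset α ↦ M.IsBase ↑A), ∏ g ∈ A, v g
      = ∑ A ∈ Finset.univ.filter (fun A : Finset α ↦ M.IsBase ↑A ∧ e ∉ A),
          ∏ g ∈ A, update v f (v e + v f) g := by
  rw [Finset.sum_congr rfl fun A hA ↦ Finset.prod_update_add v (Finset.mem_filter.1 hA).2.2,
    Finset.sum_add_distrib, ← Finset.sum_filter, Finset.filter_filter,
    ← Finset.sum_filter_not_add_sum_filter _ (e ∈ ·), Finset.filter_filter,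
    Finset.filter_filter, hC.sum_isBase_mem_eq hef]

end Matroid

open MvPolynomial

open Classical in
lemma rename_basisPoly_restrictSubtype {α : Type*} [Fintype α] (K : Type*) [Field K]
    (M : Matroid α) (S : Set α) [Fintype S] [DecidableEq S] :
    rename Subtype.val (basisPoly K (M.restrictSubtype S))
      = ∑ A ∈ Finset.univ.filter (fun A : Finset α ↦ M.IsBasis' ↑A S), ∏ g ∈ A, X g := by
  rw [basisPoly, map_sum]
  refine Finset.sum_nbij' (fun B ↦ B.map (Embedding.subtype _)) (fun A ↦ A.subtype (· ∈ S))
    ?_ ?_ ?_ ?_ ?_ <;> simp only [Finset.mem_filter, Finset.mem_univ, true_and]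
  · intro B hB
    simpa [Matroid.restrictSubtype_isBase_iff] using hB
  · intro A hA
    rw [← Finset.subtype_map_of_mem hA.subset, Finset.coe_map] at hA
    simpa [Matroid.restrictSubtype_isBase_iff] using hA
  · intro B _
    ext b
    simp
  · intro A hA
    exact Finset.subtype_map_of_mem hA.subset
  · intro B _
    simp [Finset.prod_map]

open MvPolynomial in
theorem stmt_6_general {α : Type*} [Fintype α] [DecidableEq α] (K : Type*) [Field K]
    (M : Matroid α)
    (e f : α) (hef : e ≠ f)
    -- `e` and `f` are parallel: `{e, f}` is a circuit of `M`
    (hpar : M.IsCircuit' {e, f})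
    -- `φ` is the `K`-algebra homomorphism sending `x_f` to `x_e + x_f` and
    -- fixing all other variables `x_g`, `g ∈ E ∖ {e, f}`
    (φ : MvPolynomial {g : α // g ≠ e} K →ₐ[K] MvPolynomial α K)
    (hφ : φ = MvPolynomial.aeval
      (fun g : {g : α // g ≠ e} =>
        if (g : α) = f then X e + X f else X (g : α))) :
    -- `ψ_M = φ(ψ_{M∖e})`, where `M∖e` is the deletion of `e`, a matroid on
    -- the ground set `E ∖ {e}`
    basisPoly K M = φ (basisPoly K (M.restrictSubtype {g : α | g ≠ e})) := by
  classical
  have hC : M.IsCircuit {e, f} := hpar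
  have hbasis (A : Finset α) : M.IsBasis' ↑A {g | g ≠ e} ↔ M.IsBase ↑A ∧ e ∉ A :=
    Matroid.isBasis'_compl_singleton_iff (hC.subset_ground (by simp))
      (hC.not_isColoop_of_mem (by simp))
  have hφ_rename : φ = (aeval (update X f (X e + X f))).comp
      (rename (Subtype.val : {g : α | g ≠ e} → α)) := by
    ext g
    simp [hφ, update_apply]
  rw [hφ_rename, AlgHom.comp_apply, rename_basisPoly_restrictSubtype, map_sum, basisPoly,
    hC.sum_prod_isBase_eq hef X]
  simp only [map_prod, aeval_X]
  exact Finset.sum_congr (Finset.filter_congr fun A _ ↦ (hbasis A).symm) fun _ _ ↦ rfl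

open MvPolynomial in
theorem stmt_6 {α : Type*} [Fintype α] [DecidableEq α] (K : Type*) [Field K]
    (M : Matroid α) (hE : M.E = Set.univ)
    (e f : α) (hef : e ≠ f)
    -- `e` and `f` are parallel: `{e, f}` is a circuit of `M`
    (hpar : M.IsCircuit' {e, f})
    -- `φ` is the `K`-algebra homomorphism sending `x_f` to `x_e + x_f` and
    -- fixing all other variables `x_g`, `g ∈ E ∖ {e, f}`
    (φ : MvPolynomial {g : α // g ≠ e} K →ₐ[K] MvPolynomial α K)
    (hφ : φ = MvPolynomial.aeval
      (fun g : {g : α // g ≠ e} =>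
        if (g : α) = f then X e + X f else X (g : α))) :
    -- `ψ_M = φ(ψ_{M∖e})`, where `M∖e` is the deletion of `e`, a matroid on
    -- the ground set `E ∖ {e}`
    basisPoly K M = φ (basisPoly K (M.restrictSubtype {g : α | g ≠ e})) :=
  stmt_6_general K M e f hef hpar φ hφ
end

section
/- Let G = (V, E) be a finite connected simple graph with |V| ≥ 4 and let v0 ∈ V be a nexus of G, i.e. the induced subgraph of G on V ∖ {v0} is disconnected. Then v0 is a fat nexus of G: there exists a partition V = {v0} ⊔ V1 ⊔ V2 satisfying the fat nexus conditions (a), (b), (c). -/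
/-! In a cone every edge lies in the closed neighbourhood of the apex, so condition (b) is void and
it suffices to split off a single vertex: the remaining part has at least two vertices since
`|V| ≥ 4`. Otherwise (c) is void, and splitting `V ∖ {v0}` into one connected component of the
induced subgraph and the rest leaves no edges at all between the two parts. -/

theorem Set.exists_split_ncard_ne {α : Type*} {s : Set α} (h : 3 ≤ s.ncard) :
    ∃ A B : Set α, A ∩ B = ∅ ∧ A ∪ B = s ∧ A.Nonempty ∧ B.Nonempty ∧ A.ncard ≠ B.ncard := by
  obtain ⟨a, ha⟩ := Set.nonempty_of_ncard_ne_zero (s := s) (by omega)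
  have hrest : (s \ {a}).ncard = s.ncard - 1 := Set.ncard_sdiff_singleton_of_mem ha
  refine ⟨{a}, s \ {a}, Set.inter_sdiff_self _ _, Set.union_sdiff_cancel (by simpa using ha),
    Set.singleton_nonempty a, Set.nonempty_of_ncard_ne_zero (by omega), ?_⟩
  rw [Set.ncard_singleton, hrest]
  omega

namespace SimpleGraph

theorem exists_nonadj_split_of_not_preconnected_induce {V : Type*} {G : SimpleGraph V}
    {s : Set V} (h : ¬ (G.induce s).Preconnected) :
    ∃ A B : Set V, A ∩ B = ∅ ∧ A ∪ B = s ∧ A.Nonempty ∧ B.Nonempty ∧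
      ∀ a ∈ A, ∀ b ∈ B, ¬ G.Adj a b := by
  obtain ⟨x, y, hxy⟩ : ∃ x y, ¬ (G.induce s).Reachable x y := by
    simpa [Preconnected] using h
  let A : Set V := {v | ∃ hv : v ∈ s, (G.induce s).Reachable x ⟨v, hv⟩}
  refine ⟨A, s \ A, Set.inter_sdiff_self _ _, Set.union_sdiff_cancel fun v hv => hv.1,
    ⟨x, x.2, .rfl⟩, ⟨y, y.2, fun ⟨_, hy⟩ => hxy hy⟩, ?_⟩
  rintro a ⟨ha, hxa⟩ b ⟨hb, hAb⟩ hab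
  have hab' : (G.induce s).Adj ⟨a, ha⟩ ⟨b, hb⟩ := hab
  exact hAb ⟨hb, hxa.trans hab'.reachable⟩

end SimpleGraph

theorem stmt_7_general {V : Type*} [Fintype V]
    (G : SimpleGraph V)
    (hcard : 4 ≤ Fintype.card V)
    (v0 : V)
    -- `v0` is a nexus: the induced subgraph on `V ∖ {v0}` is disconnected
    (hnexus : ¬ (G.induce ({v0}ᶜ : Set V)).Connected) :
    -- `v0` is a fat nexus
    ∃ V1 V2 : Set V,
      -- `V = {v0} ⊔ V1 ⊔ V2` is a partition
      v0 ∉ V1 ∧ v0 ∉ V2 ∧ V1 ∩ V2 = ∅ ∧ {v0} ∪ V1 ∪ V2 = Set.univ ∧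
      -- (a) both parts are nonempty
      V1.Nonempty ∧ V2.Nonempty ∧
      -- (b) every edge between `V1` and `V2` has both endpoints in the closed
      -- neighborhood `V0` of `v0`
      (∀ a ∈ V1, ∀ b ∈ V2, G.Adj a b →
        a ∈ insert v0 (G.neighborSet v0) ∧ b ∈ insert v0 (G.neighborSet v0)) ∧
      -- (c) if `G` is a cone with apex `v0`, then `|V1| ≠ |V2|`
      (insert v0 (G.neighborSet v0) = Set.univ → V1.ncard ≠ V2.ncard) := by
  have hcompl : 3 ≤ ({v0}ᶜ : Set V).ncard := by
    rw [Set.ncard_compl, Set.ncard_singleton, Nat.card_eq_fintype_card]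
    omega
  obtain ⟨A, B, hdisj, hunion, hA, hB, hedges, hcone⟩ :
      ∃ A B : Set V, A ∩ B = ∅ ∧ A ∪ B = {v0}ᶜ ∧ A.Nonempty ∧ B.Nonempty ∧
        (∀ a ∈ A, ∀ b ∈ B, G.Adj a b →
          a ∈ insert v0 (G.neighborSet v0) ∧ b ∈ insert v0 (G.neighborSet v0)) ∧
        (insert v0 (G.neighborSet v0) = Set.univ → A.ncard ≠ B.ncard) := by
    by_cases hcone : insert v0 (G.neighborSet v0) = Set.univ
    · obtain ⟨A, B, hdisj, hunion, hA, hB, hne⟩ := Set.exists_split_ncard_ne hcompl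
      exact ⟨A, B, hdisj, hunion, hA, hB, fun _ _ _ _ _ => by simp [hcone], fun _ => hne⟩
    · have hpre : ¬ (G.induce ({v0}ᶜ : Set V)).Preconnected := fun h =>
        hnexus ((SimpleGraph.connected_iff _).2
          ⟨h, (Set.nonempty_of_ncard_ne_zero (by omega)).to_subtype⟩)
      obtain ⟨A, B, hdisj, hunion, hA, hB, hnadj⟩ :=
        SimpleGraph.exists_nonadj_split_of_not_preconnected_induce hpre
      exact ⟨A, B, hdisj, hunion, hA, hB, fun a ha b hb hab => (hnadj a ha b hb hab).elim,
        fun h => (hcone h).elim⟩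
  have hv0 : v0 ∉ A ∪ B := hunion ▸ fun h => h rfl
  refine ⟨A, B, fun h => hv0 (.inl h), fun h => hv0 (.inr h), hdisj, ?_, hA, hB, hedges, hcone⟩
  rw [Set.union_assoc, hunion, Set.union_compl_self]

theorem stmt_7 {V : Type*} [Fintype V] [DecidableEq V]
    (G : SimpleGraph V) (hconn : G.Connected)
    (hcard : 4 ≤ Fintype.card V)
    (v0 : V)
    -- `v0` is a nexus: the induced subgraph on `V ∖ {v0}` is disconnected
    (hnexus : ¬ (G.induce ({v0}ᶜ : Set V)).Connected) :
    -- `v0` is a fat nexus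
    ∃ V1 V2 : Set V,
      -- `V = {v0} ⊔ V1 ⊔ V2` is a partition
      v0 ∉ V1 ∧ v0 ∉ V2 ∧ V1 ∩ V2 = ∅ ∧ {v0} ∪ V1 ∪ V2 = Set.univ ∧
      -- (a) both parts are nonempty
      V1.Nonempty ∧ V2.Nonempty ∧
      -- (b) every edge between `V1` and `V2` has both endpoints in the closed
      -- neighborhood `V0` of `v0`
      (∀ a ∈ V1, ∀ b ∈ V2, G.Adj a b →
        a ∈ insert v0 (G.neighborSet v0) ∧ b ∈ insert v0 (G.neighborSet v0)) ∧
      -- (c) if `G` is a cone with apex `v0`, then `|V1| ≠ |V2|`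
      (insert v0 (G.neighborSet v0) = Set.univ → V1.ncard ≠ V2.ncard) :=
  stmt_7_general G hcard v0 hnexus
end

section
/- Let M be a matroid on a finite ground set E and let e ≠ f be elements of E that are in series in M, i.e. {e, f} is a circuit of the dual matroid M✶. Let S ⊆ E with e, f ∈ S and with closure cl_M(S) = E. Then in the restriction M|S, either e and f are in series (i.e. {e, f} is a circuit of the dual (M|S)✶), or both e and f are coloops of M|S. -/
/-- A coloop of a matroid is an element contained in every base. -/
def Matroid.IsColoop' {α : Type*} (M : Matroid α) (e : α) : Prop :=
  ∀ B, M.IsBase B → e ∈ B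

/-!
Every base of `M|S` is a base of `M` because `S` is spanning, so it meets the cocircuit `{e, f}`:
thus `{e, f}` is dependent in `(M|S)✶`, hence a circuit there unless `e` or `f` is a coloop of
`M|S`. By orthogonality, a circuit of `M|S` through one of `e, f` passes through the other, so
`e` is a coloop of `M|S` exactly when `f` is.
-/

namespace Matroid

variable {α : Type*} {M : Matroid α} {C K S : Set α} {e f : α}

lemma IsCocircuit.dual_restrict_dep (hK : M.IsCocircuit K) (hS : M.Spanning S) (hKS : K ⊆ S) :
    (M ↾ S)✶.Dep K := by
  rw [dual_dep_iff_forall, restrict_ground_eq]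
  exact ⟨fun B hB ↦ (dual_dep_iff_forall.1 hK.dep).1 B (hS.isBase_restrict_iff.1 hB).1, hKS⟩

lemma Dep.isCircuit_or_isLoop_of_pair (h : M.Dep {e, f}) :
    M.IsCircuit {e, f} ∨ M.IsLoop e ∨ M.IsLoop f := by
  obtain ⟨C, hCef, hC⟩ := h.exists_isCircuit_subset
  obtain rfl | rfl | rfl | rfl := Set.subset_pair_iff_eq.1 hCef
  · exact absurd hC.nonempty Set.not_nonempty_empty
  · exact Or.inr (Or.inl (singleton_dep.1 hC.dep))
  · exact Or.inr (Or.inr (singleton_dep.1 hC.dep))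
  · exact Or.inl hC

lemma IsCircuit.mem_of_mem_of_isCocircuit_pair (hC : M.IsCircuit C)
    (hK : M.IsCocircuit {e, f}) (he : e ∈ C) : f ∈ C := by
  by_contra hf
  exact hC.inter_isCocircuit_ne_singleton hK (e := e) (Set.ext fun x ↦ by aesop)

lemma IsCocircuit.restrict_isColoop_iff_of_pair (hK : M.IsCocircuit {e, f}) (hS : S ⊆ M.E)
    (he : e ∈ S) (hf : f ∈ S) : (M ↾ S).IsColoop e ↔ (M ↾ S).IsColoop f := by
  suffices h : ∀ {x y}, M.IsCocircuit {x, y} → x ∈ S → y ∈ S →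
      (M ↾ S).IsColoop x → (M ↾ S).IsColoop y from
    ⟨h hK he hf, h (Set.pair_comm e f ▸ hK) hf he⟩
  intro x y hK hx hy hcol
  rw [isColoop_iff_forall_notMem_isCircuit hx] at hcol
  rw [isColoop_iff_forall_notMem_isCircuit hy]
  intro C hC hyC
  exact hcol hC (((restrict_isCircuit_iff hS).1 hC).1.mem_of_mem_of_isCocircuit_pair
    (Set.pair_comm x y ▸ hK) hyC)

end Matroid

open Matroid in
theorem stmt_8_general {α : Type*}
    (M : Matroid α) (hE : M.E = Set.univ)
    (e f : α)
    -- `e` and `f` are in series: `{e, f}` is a circuit of the dual `M✶`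
    (hser : M✶.IsCircuit' {e, f})
    (S : Set α) (heS : e ∈ S) (hfS : f ∈ S)
    -- `cl_M(S) = E`
    (hcl : M.closure S = Set.univ) :
    -- in `M|S`, either `e, f` are in series, or both are coloops
    (M ↾ S)✶.IsCircuit' {e, f} ∨
      ((M ↾ S).IsColoop' e ∧ (M ↾ S).IsColoop' f) := by
  have hK : M.IsCocircuit {e, f} := hser
  have hSE : S ⊆ M.E := hE ▸ Set.subset_univ S
  have hS : M.Spanning S := ⟨hcl.trans hE.symm, hSE⟩
  have hcoloop_iff := hK.restrict_isColoop_iff_of_pair hSE heS hfS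
  have hcoloop' : ∀ {x}, (M ↾ S).IsColoop x → (M ↾ S).IsColoop' x :=
    fun h B hB ↦ isColoop_iff_forall_mem_isBase.1 h hB
  rcases (hK.dual_restrict_dep hS (Set.pair_subset heS hfS)).isCircuit_or_isLoop_of_pair with
    hser' | he | hf
  · exact Or.inl hser'
  · exact Or.inr ⟨hcoloop' he, hcoloop' (hcoloop_iff.1 he)⟩
  · exact Or.inr ⟨hcoloop' (hcoloop_iff.2 hf), hcoloop' hf⟩

open Matroid in
theorem stmt_8 {α : Type*} [Fintype α]
    (M : Matroid α) (hE : M.E = Set.univ)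
    (e f : α) (hef : e ≠ f)
    -- `e` and `f` are in series: `{e, f}` is a circuit of the dual `M✶`
    (hser : M✶.IsCircuit' {e, f})
    (S : Set α) (heS : e ∈ S) (hfS : f ∈ S)
    -- `cl_M(S) = E`
    (hcl : M.closure S = Set.univ) :
    -- in `M|S`, either `e, f` are in series, or both are coloops
    (M ↾ S)✶.IsCircuit' {e, f} ∨
      ((M ↾ S).IsColoop' e ∧ (M ↾ S).IsColoop' f) :=
  stmt_8_general M hE e f hser S heS hfS hcl
end
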